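/- Let G be a discrete group, N ⊴ G, and B a *-algebra with G-action α. Green's bimodule X = X_N^G(B) is the vector space spanned by symbols (b, r), b ∈ B, r ∈ G, with left action of B⋊G⋊(G/N), right action of B⋊N, and inner products given on generators by: (a, r, sN)·(b, t) = (a α_r(b), rt) if sN = tN else 0; ⟨(a,r),(b,s)⟩_left = (a α_{rs⁻¹}(b*), rs⁻¹, sN); (a,r)·(b,n) = (a α_r(b), rn); ⟨(a,r),(b,s)⟩_right = (α_{r⁻¹}(a* b), r⁻¹ s) if rN = sN else 0. Then the imprimitivity compatibility identity ⟨x, y⟩_left · z = x · ⟨y, z⟩_right holds for all generators x = (a,r), y = (b,s), z = (c,t) of X. -/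
import Mathlib


/-!
Statement 9: let `G` be a discrete group, `N ⊴ G`, and `(B, G, α)` an action by
*-automorphisms.  Green's bimodule `X = X_N^G(B)` is spanned by generators
`(b, r)` (modelled as `Finsupp.single r b` in `G →₀ B`), with
  left action of `B ⋊ G ⋊ (G/N)`:  `(a, r, sN)·(b, t) = (a α_r(b), r t)` if
    `sN = tN`, else `0`;
  left inner product:  `⟨(a,r),(b,s)⟩_L = (a α_{r s⁻¹}(b*), r s⁻¹, sN)`;
  right action of `B ⋊ N`:  `(a, r)·(b, n) = (a α_r(b), r n)`;
  right inner product:  `⟨(a,r),(b,s)⟩_R = (α_{r⁻¹}(a* b), r⁻¹ s)` if `rN = sN`,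
    else `0`.
Then the imprimitivity compatibility `⟨x, y⟩_L · z = x · ⟨y, z⟩_R` holds on all
generators `x = (a,r)`, `y = (b,s)`, `z = (c,t)`.
-/

attribute [local instance] Classical.propDecidable

noncomputable section

variable {G : Type*} [Group G] {B : Type*} [Ring B] [Algebra ℂ B] [StarRing B]
  [StarModule ℂ B] {N : Subgroup G} [N.Normal]

variable (α : G →* (B ≃ₐ[ℂ] B))

/-- The `B ⋊ G ⋊ (G/N)`-valued left inner product of the generators `(a, r)` and
`(b, s)` of Green's bimodule: `(a α_{r s⁻¹}(b*), r s⁻¹, sN)`. -/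
def greenLeftInner (a : B) (r : G) (b : B) (s : G) : (G × G ⧸ N) →₀ B :=
  Finsupp.single (r * s⁻¹, (s : G ⧸ N)) (a * α (r * s⁻¹) (star b))

/-- The left action of an element of `B ⋊ G ⋊ (G/N)` on the generator `(c, t)` of
Green's bimodule, defined on algebra generators by
`(a, r, sN)·(c, t) = (a α_r(c), r t)` when `sN = tN` and `0` otherwise. -/
def lActX (ℓ : (G × G ⧸ N) →₀ B) (c : B) (t : G) : G →₀ B :=
  ℓ.sum fun p a =>
    if p.2 = (t : G ⧸ N) then Finsupp.single (p.1 * t) (a * α p.1 c) else 0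

/-- The `B ⋊ N`-valued right inner product of the generators `(b, s)` and `(c, t)`
of Green's bimodule: `(α_{s⁻¹}(b* c), s⁻¹ t)` if `sN = tN`, else `0`. -/
def greenRightInner (b : B) (s : G) (c : B) (t : G) : N →₀ B :=
  if h : (s : G ⧸ N) = (t : G ⧸ N) then
    Finsupp.single ⟨s⁻¹ * t, QuotientGroup.eq.mp h⟩ (α s⁻¹ (star b * c))
  else 0

/-- The right action of an element of `B ⋊ N` on the generator `(a, r)` of Green's
bimodule, defined on algebra generators by `(a, r)·(c, n) = (a α_r(c), r n)`. -/
def rActX (a : B) (r : G) (ρ : N →₀ B) : G →₀ B :=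
  ρ.sum fun n c => Finsupp.single (r * (n : G)) (a * α r c)

/-- The imprimitivity compatibility identity `⟨x, y⟩_L · z = x · ⟨y, z⟩_R` for
Green's bimodule `X_N^G(B)`, on generators. -/
theorem green_bimodule_imprimitivity_compatibility
    (hαstar : ∀ (s : G) (b : B), α s (star b) = star (α s b)) :
    ∀ (a b c : B) (r s t : G),
      lActX (N := N) α (greenLeftInner (N := N) α a r b s) c t =
        rActX α a r (greenRightInner (N := N) α b s c t) := by
  intro a b c r s t
  unfold lActX greenLeftInner greenRightInner rActX
  rw [Finsupp.sum_single_index (by simp)]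
  by_cases h : (s : G ⧸ N) = (t : G ⧸ N)
  · rw [if_pos h, dif_pos h, Finsupp.sum_single_index (by simp)]
    congr 1
    · group
    · rw [mul_assoc]
      congr 1
      rw [show r = (r * s⁻¹) * s by group, map_mul, AlgEquiv.mul_apply,
        map_mul, map_mul]
      congr 1
      rw [show (s : G) = s * s⁻¹ * s by group]
      simp [map_mul]
  · rw [if_neg h, dif_neg h]
    simp [Finsupp.sum]

end
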